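/- arXiv:1908.02250 — 3 statements merged into one kernel-verified Lean document; each statement's English description precedes it below -/
import Mathlib

section
/- For every positive integer k, D(2^k) = 2^k - k. -/
/-!
Appending a binary digit `b` to `m` (i.e. passing to `2m + b`) changes `f` by `+1` for `b = 1` and
by `-1` for `b = 0`, except that `0` has no digits at all. Pairing `2m` with `2m + 1`, the sum
`S k` of `f` over `[0, 2^k)` therefore satisfies `S (k + 1) = 2 S k + 1`, the `+1` coming from
`m = 0`; hence `S k = 2^k - 1`. Adding `f (2^k) = 1 - k` gives `D (2^k) = 2^k - k`.
-/

/-- f m = (#1 digits) - (#0 digits) in the binary expansion of m. -/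
def f (m : ℕ) : ℤ :=
  2 * ((Nat.digits 2 m).count 1 : ℤ) - ((Nat.digits 2 m).length : ℤ)

/-- Cumulated deficient binary digit sum (OEIS A268289), D 0 = 0. -/
def D (n : ℕ) : ℤ := ∑ m ∈ Finset.Icc 1 n, f m

open Finset

lemma f_zero : f 0 = 0 := by
  simp [f]

lemma f_cons_digit {b m : ℕ} (hb : b < 2) (hbm : b ≠ 0 ∨ m ≠ 0) :
    f (b + 2 * m) = f m + (2 * b - 1 : ℤ) := by
  rw [f, f, Nat.digits_add 2 one_lt_two b m hb hbm]
  interval_cases b <;> simp <;> ring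

lemma f_two_mul_add_one (m : ℕ) : f (2 * m + 1) = f m + 1 := by
  rw [add_comm, f_cons_digit one_lt_two (.inl one_ne_zero)]
  norm_num

lemma f_two_mul {m : ℕ} (hm : m ≠ 0) : f (2 * m) = f m - 1 := by
  simpa [sub_eq_add_neg] using f_cons_digit two_pos (.inr hm)

lemma f_two_pow (k : ℕ) : f (2 ^ k) = 1 - k := by
  induction k with
  | zero => simp [f]
  | succ k ih =>
    rw [pow_succ', f_two_mul (pow_ne_zero k two_ne_zero), ih]
    push_cast
    ring

lemma sum_range_two_mul {M : Type*} [AddCommMonoid M] (g : ℕ → M) (n : ℕ) :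
    ∑ m ∈ range (2 * n), g m = ∑ m ∈ range n, (g (2 * m) + g (2 * m + 1)) := by
  induction n with
  | zero => simp
  | succ n ih =>
    rw [Nat.mul_succ, sum_range_succ, sum_range_succ, ih, sum_range_succ, add_assoc]

lemma sum_range_two_mul_f (n : ℕ) (hn : n ≠ 0) :
    ∑ m ∈ range (2 * n), f m = 2 * ∑ m ∈ range n, f m + 1 := by
  obtain ⟨n, rfl⟩ := Nat.exists_eq_succ_of_ne_zero hn
  rw [sum_range_two_mul, sum_range_succ', sum_range_succ', mul_add, mul_sum]
  have hpair : ∀ m ∈ range n, f (2 * (m + 1)) + f (2 * (m + 1) + 1) = 2 * f (m + 1) := by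
    intro m _
    rw [f_two_mul m.succ_ne_zero, f_two_mul_add_one]
    ring
  rw [sum_congr rfl hpair, f_two_mul_add_one, mul_zero, f_zero]
  ring

lemma sum_range_two_pow_f (k : ℕ) : ∑ m ∈ range (2 ^ k), f m = 2 ^ k - 1 := by
  induction k with
  | zero => simp [f_zero]
  | succ k ih =>
    rw [pow_succ', sum_range_two_mul_f _ (pow_ne_zero k two_ne_zero), ih]
    ring

lemma D_eq_sum_range (n : ℕ) : D n = ∑ m ∈ range (n + 1), f m := by
  rw [D, range_eq_Ico, sum_eq_sum_Ico_succ_bot n.succ_pos, f_zero, zero_add, zero_add,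
    Nat.succ_eq_add_one, Ico_add_one_right_eq_Icc]

theorem stmt_2_general (k : ℕ) : D (2 ^ k) = 2 ^ k - k := by
  rw [D_eq_sum_range, sum_range_succ, sum_range_two_pow_f, f_two_pow]
  ring

theorem stmt_2 (k : ℕ) (hk : 0 < k) : D (2 ^ k) = 2 ^ k - k :=
  stmt_2_general k
end

section
/- For every real ξ ∈ [0, 1/2], τ(ξ + 1/2) = 1/2 − 2ξ + τ(ξ). -/
/-- Distance from y to the nearest integer. -/
noncomputable def s (y : ℝ) : ℝ := |y - round y|

/-- The Takagi function. -/
noncomputable def τ (x : ℝ) : ℝ := ∑' n : ℕ, s (2 ^ n * x) / 2 ^ n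

/-! Writing `τ x = s x + τ (2 x) / 2` and using that `τ` has period `1`, the difference
`τ (ξ + 1/2) - τ ξ` reduces to `s (ξ + 1/2) - s ξ = (1/2 - ξ) - ξ` for `ξ ∈ [0, 1/2]`. -/

lemma s_add_intCast (y : ℝ) (k : ℤ) : s (y + k) = s y := by
  simp only [s, round_add_intCast, Int.cast_add, add_sub_add_right_eq_sub]

lemma s_nonneg (y : ℝ) : 0 ≤ s y := abs_nonneg _

lemma s_le_half (y : ℝ) : s y ≤ 1 / 2 := abs_sub_round y

lemma s_eq_abs_of_abs_le_half {y : ℝ} (hy : |y| ≤ 1 / 2) : s y = |y| := by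
  refine le_antisymm (by simpa [s] using round_le y 0) ?_
  obtain hr | hr := eq_or_ne (round y) 0
  · simp [s, hr]
  · -- any nonzero integer is at distance at least `1 - |y| ≥ 1/2 ≥ |y|` from `y`
    have h1 : (1 : ℝ) ≤ |(round y : ℝ)| := by exact_mod_cast Int.one_le_abs hr
    have h2 : |(round y : ℝ)| - |y| ≤ |y - round y| := by
      simpa [abs_sub_comm] using abs_sub_abs_le_abs_sub (round y : ℝ) y
    unfold s
    linarith

lemma summable_takagi_terms (x : ℝ) : Summable fun n : ℕ => s (2 ^ n * x) / 2 ^ n := by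
  refine Summable.of_nonneg_of_le (fun n => by have := s_nonneg (2 ^ n * x); positivity)
    (fun n => ?_) ((summable_geometric_two).mul_left (1 / 2))
  calc s (2 ^ n * x) / 2 ^ n ≤ 1 / 2 / 2 ^ n := by gcongr; exact s_le_half _
    _ = 1 / 2 * (1 / 2) ^ n := by rw [one_div_pow]; ring

lemma takagi_eq_s_add_takagi_two_mul_div_two (x : ℝ) : τ x = s x + τ (2 * x) / 2 := by
  rw [τ, (summable_takagi_terms x).tsum_eq_zero_add, τ, ← tsum_div_const]
  congr 1
  · simp
  · refine tsum_congr fun n => ?_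
    rw [pow_succ, ← mul_assoc, div_div]

lemma takagi_add_intCast (x : ℝ) (k : ℤ) : τ (x + k) = τ x := by
  refine tsum_congr fun n => ?_
  have : (2 : ℝ) ^ n * (x + k) = 2 ^ n * x + ((2 ^ n * k : ℤ) : ℝ) := by push_cast; ring
  rw [this, s_add_intCast]

theorem stmt_7 (ξ : ℝ) (hξ : ξ ∈ Set.Icc (0 : ℝ) (1 / 2)) :
    τ (ξ + 1 / 2) = 1 / 2 - 2 * ξ + τ ξ := by
  obtain ⟨h0, h1⟩ := hξ
  have hs : s ξ = ξ := by
    rw [s_eq_abs_of_abs_le_half (by rwa [abs_of_nonneg h0]), abs_of_nonneg h0]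
  have hs_half : s (ξ + 1 / 2) = 1 / 2 - ξ := by
    have hle : |ξ - 1 / 2| ≤ 1 / 2 := abs_le.mpr ⟨by linarith, by linarith⟩
    rw [show ξ + 1 / 2 = ξ - 1 / 2 + ((1 : ℤ) : ℝ) by push_cast; ring, s_add_intCast,
      s_eq_abs_of_abs_le_half hle, abs_of_nonpos (by linarith)]
    ring
  have hτ : τ (2 * (ξ + 1 / 2)) = τ (2 * ξ) := by
    rw [show 2 * (ξ + 1 / 2) = 2 * ξ + ((1 : ℤ) : ℝ) by push_cast; ring, takagi_add_intCast]
  rw [takagi_eq_s_add_takagi_two_mul_div_two, takagi_eq_s_add_takagi_two_mul_div_two ξ, hτ,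
    hs, hs_half]
  ring
end

section
/- For nonnegative integers n, k with n ≤ 2^k, D(2^(k+1) − n − 1) = 2^k − 2n + D(2^k + n − 1). -/
open Finset

lemma f_add_two_mul {x : ℕ} (hx : x < 2) {m : ℕ} (hm : m ≠ 0) :
    f (x + 2 * m) = f m + 2 * x - 1 := by
  rw [f, f, Nat.digits_add 2 one_lt_two x m hx (Or.inr hm)]
  interval_cases x <;> simp <;> ring

lemma f_two_pow_add_add_f_two_pow_add {k i j : ℕ} (hij : i + j + 1 = 2 ^ k) :
    f (2 ^ k + i) + f (2 ^ k + j) = 2 := by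
  induction k generalizing i j with
  | zero =>
    obtain ⟨rfl, rfl⟩ : i = 0 ∧ j = 0 := by omega
    simp [f]
  | succ k ih =>
    have hpow : 2 ^ (k + 1) = 2 * 2 ^ k := pow_succ' 2 k
    have hparity : i % 2 + j % 2 = 1 := by omega
    have hi : 2 ^ (k + 1) + i = i % 2 + 2 * (2 ^ k + i / 2) := by omega
    have hj : 2 ^ (k + 1) + j = j % 2 + 2 * (2 ^ k + j / 2) := by omega
    rw [hi, hj, f_add_two_mul (Nat.mod_lt i two_pos) (by positivity),
      f_add_two_mul (Nat.mod_lt j two_pos) (by positivity)]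
    have hhalves := ih (i := i / 2) (j := j / 2) (by omega)
    have hparity' : ((i % 2 : ℕ) : ℤ) + (j % 2 : ℕ) = 1 := by exact_mod_cast hparity
    linarith

lemma D_add (a m : ℕ) : D (a + m) = D a + ∑ i ∈ range m, f (a + i + 1) := by
  induction m with
  | zero => simp
  | succ m ih =>
    rw [sum_range_succ, ← add_assoc (D a), ← ih, ← add_assoc, D, D, sum_Icc_succ_top (by omega)]

lemma D_of_pos {m : ℕ} (hm : 0 < m) : D m = D (m - 1) + f m := by
  obtain ⟨m, rfl⟩ := Nat.exists_eq_add_of_lt hm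
  simpa using D_add m 1

lemma sum_f_two_pow_add (k : ℕ) : ∑ i ∈ range (2 ^ k), f (2 ^ k + i) = 2 ^ k := by
  have hpairs : ∑ i ∈ range (2 ^ k), (f (2 ^ k + i) + f (2 ^ k + (2 ^ k - 1 - i))) =
      ∑ _i ∈ range (2 ^ k), (2 : ℤ) :=
    sum_congr rfl fun i hi ↦
      f_two_pow_add_add_f_two_pow_add (by rw [mem_range] at hi; omega)
  rw [sum_add_distrib, sum_range_reflect (fun i ↦ f (2 ^ k + i))] at hpairs
  simp only [sum_const, card_range, Int.nsmul_eq_mul, Nat.cast_pow, Nat.cast_ofNat] at hpairs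
  linarith

lemma D_two_pow_succ_sub_one (k : ℕ) : D (2 ^ (k + 1) - 1) = 2 ^ k + D (2 ^ k - 1) := by
  have hpos : 0 < 2 ^ k := by positivity
  have hblock := D_add (2 ^ k - 1) (2 ^ k)
  rw [show 2 ^ k - 1 + 2 ^ k = 2 ^ (k + 1) - 1 by rw [pow_succ]; omega,
    sum_congr rfl fun i _ ↦ by rw [show 2 ^ k - 1 + i + 1 = 2 ^ k + i by omega],
    sum_f_two_pow_add] at hblock
  rw [hblock, add_comm]

theorem stmt_13 (n k : ℕ) (h : n ≤ 2 ^ k) :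
    D (2 ^ (k + 1) - n - 1) = 2 ^ k - 2 * n + D (2 ^ k + n - 1) := by
  have hpow : 2 ^ (k + 1) = 2 ^ k + 2 ^ k := by ring
  induction n with
  | zero => simpa using D_two_pow_succ_sub_one k
  | succ n ih =>
    have ih' := ih (by omega)
    obtain ⟨j, hj⟩ : ∃ j, n + j + 1 = 2 ^ k := ⟨2 ^ k - n - 1, by omega⟩
    have hleft : D (2 ^ k + j) = D (2 ^ k + j - 1) + f (2 ^ k + j) := D_of_pos (by omega)
    have hright : D (2 ^ k + n) = D (2 ^ k + n - 1) + f (2 ^ k + n) := D_of_pos (by omega)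
    have hpair := f_two_pow_add_add_f_two_pow_add hj
    rw [show 2 ^ (k + 1) - n - 1 = 2 ^ k + j by omega] at ih'
    rw [show 2 ^ (k + 1) - (n + 1) - 1 = 2 ^ k + j - 1 by omega,
      show 2 ^ k + (n + 1) - 1 = 2 ^ k + n by omega]
    push_cast
    linarith
end
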